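/- arXiv:1606.04876 — 2 statements merged into one kernel-verified Lean document; each statement's English description precedes it below -/
import Mathlib

section
/- Let L ⊆ ℤ³ be the subgroup generated by (0,3,0), (0,0,2), (1,1,1). For every pair of distinct cosets a + L, b + L of L in ℤ³ there exist x ∈ a + L and y ∈ b + L with Σᵢ (xᵢ − yᵢ)² = 1, i.e., x and y differ by a standard basis vector up to sign. -/
lemma mem_L_of_mod (L : AddSubgroup (Fin 3 → ℤ))
    (hL : L = AddSubgroup.closure {![0, 3, 0], ![0, 0, 2], ![1, 1, 1]})
    (v : Fin 3 → ℤ) (h : (v 0 + 2 * v 1 + 3 * v 2) % 6 = 0) : v ∈ L := by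
  subst hL
  have h3 : (3:ℤ) ∣ (v 1 - v 0) := by omega
  have h2 : (2:ℤ) ∣ (v 2 - v 0) := by omega
  obtain ⟨k, hk⟩ := h3
  obtain ⟨m, hm⟩ := h2
  have hv : v = (v 0) • ![1, 1, 1] + k • ![0, 3, 0] + m • ![0, 0, 2] := by
    funext i
    fin_cases i <;>
      simp [Pi.smul_apply, smul_eq_mul] <;> omega
  rw [hv]
  refine add_mem (add_mem ?_ ?_) ?_ <;>
    refine AddSubgroup.zsmul_mem _ (AddSubgroup.subset_closure ?_) _ <;> simp

theorem lattice_cosets_adjacent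
    (L : AddSubgroup (Fin 3 → ℤ))
    (hL : L = AddSubgroup.closure {![0, 3, 0], ![0, 0, 2], ![1, 1, 1]}) :
    ∀ a b : Fin 3 → ℤ,
      (QuotientAddGroup.mk a : (Fin 3 → ℤ) ⧸ L) ≠ QuotientAddGroup.mk b →
      ∃ x y : Fin 3 → ℤ, x - a ∈ L ∧ y - b ∈ L ∧
        ∑ i : Fin 3, (x i - y i) ^ 2 = 1 := by
  intro a b hab
  set n : ℤ := (a 0 - b 0) + 2 * (a 1 - b 1) + 3 * (a 2 - b 2) with hn
  have hcases : n % 6 = 0 ∨ n % 6 = 1 ∨ n % 6 = 2 ∨ n % 6 = 3 ∨ n % 6 = 4 ∨ n % 6 = 5 := by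
    omega
  rcases hcases with h | h | h | h | h | h
  · exfalso
    apply hab
    rw [QuotientAddGroup.eq]
    apply mem_L_of_mod L hL
    simp only [Pi.add_apply, Pi.neg_apply]
    omega
  · exact ⟨a, a - ![1, 0, 0], sub_self a ▸ L.zero_mem,
      mem_L_of_mod L hL _ (by simp only [Pi.sub_apply, Matrix.cons_val_zero, Matrix.cons_val_one, Matrix.head_cons, Matrix.cons_val_two, Matrix.tail_cons]; omega),
      by simp [Fin.sum_univ_three, Pi.sub_apply]⟩
  · exact ⟨a, a - ![0, 1, 0], sub_self a ▸ L.zero_mem,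
      mem_L_of_mod L hL _ (by simp only [Pi.sub_apply, Matrix.cons_val_zero, Matrix.cons_val_one, Matrix.head_cons, Matrix.cons_val_two, Matrix.tail_cons]; omega),
      by simp [Fin.sum_univ_three, Pi.sub_apply]⟩
  · exact ⟨a, a - ![0, 0, 1], sub_self a ▸ L.zero_mem,
      mem_L_of_mod L hL _ (by simp only [Pi.sub_apply, Matrix.cons_val_zero, Matrix.cons_val_one, Matrix.head_cons, Matrix.cons_val_two, Matrix.tail_cons]; omega),
      by simp [Fin.sum_univ_three, Pi.sub_apply]⟩
  · exact ⟨a, a - ![0, -1, 0], sub_self a ▸ L.zero_mem,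
      mem_L_of_mod L hL _ (by simp only [Pi.sub_apply, Matrix.cons_val_zero, Matrix.cons_val_one, Matrix.head_cons, Matrix.cons_val_two, Matrix.tail_cons]; omega),
      by simp [Fin.sum_univ_three, Pi.sub_apply]⟩
  · exact ⟨a, a - ![-1, 0, 0], sub_self a ▸ L.zero_mem,
      mem_L_of_mod L hL _ (by simp only [Pi.sub_apply, Matrix.cons_val_zero, Matrix.cons_val_one, Matrix.head_cons, Matrix.cons_val_two, Matrix.tail_cons]; omega),
      by simp [Fin.sum_univ_three, Pi.sub_apply]⟩
end

section
/- For every point p ∈ ℤ³ and every coset c ≠ p + L of the subgroup L generated by (0,3,0), (0,0,2), (1,1,1), there exists q ∈ ℤ³ with q + L = c and Σᵢ (pᵢ − qᵢ)² = 1. -/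
theorem mem_lat_iff (L : AddSubgroup (Fin 3 → ℤ))
    (hL : L = AddSubgroup.closure {![0, 3, 0], ![0, 0, 2], ![1, 1, 1]}) (x : Fin 3 → ℤ) :
    x ∈ L ↔ (3 ∣ x 1 - x 0 ∧ 2 ∣ x 2 - x 0) := by
  constructor
  · intro hx
    let K : AddSubgroup (Fin 3 → ℤ) :=
      { carrier := {y | 3 ∣ y 1 - y 0 ∧ 2 ∣ y 2 - y 0}
        zero_mem' := by simp
        add_mem' := by
          rintro a b ⟨⟨k, hk⟩, ⟨m, hm⟩⟩ ⟨⟨k', hk'⟩, ⟨m', hm'⟩⟩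
          exact ⟨⟨k + k', by simp [Pi.add_apply]; omega⟩, ⟨m + m', by simp [Pi.add_apply]; omega⟩⟩
        neg_mem' := by
          rintro a ⟨⟨k, hk⟩, ⟨m, hm⟩⟩
          exact ⟨⟨-k, by simp [Pi.neg_apply]; omega⟩, ⟨-m, by simp [Pi.neg_apply]; omega⟩⟩ }
    have hle : L ≤ K := by
      rw [hL, AddSubgroup.closure_le]
      rintro y (rfl | rfl | rfl) <;> exact ⟨by decide, by decide⟩
    exact hle hx
  · rintro ⟨⟨k, hk⟩, ⟨m, hm⟩⟩
    have hx : x = (x 0) • ![1, 1, 1] + k • ![0, 3, 0] + m • ![0, 0, 2] := by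
      funext i
      fin_cases i <;> simp <;> omega
    rw [hL, hx]
    have h1 : (![1, 1, 1] : Fin 3 → ℤ) ∈ AddSubgroup.closure {![0, 3, 0], ![0, 0, 2], ![1, 1, 1]} :=
      AddSubgroup.subset_closure (by simp)
    have h2 : (![0, 3, 0] : Fin 3 → ℤ) ∈ AddSubgroup.closure {![0, 3, 0], ![0, 0, 2], ![1, 1, 1]} :=
      AddSubgroup.subset_closure (by simp)
    have h3 : (![0, 0, 2] : Fin 3 → ℤ) ∈ AddSubgroup.closure {![0, 3, 0], ![0, 0, 2], ![1, 1, 1]} :=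
      AddSubgroup.subset_closure (by simp)
    exact add_mem (add_mem (zsmul_mem h1 _) (zsmul_mem h2 _)) (zsmul_mem h3 _)

theorem lattice_point_adjacent_to_every_other_coset
    (L : AddSubgroup (Fin 3 → ℤ))
    (hL : L = AddSubgroup.closure {![0, 3, 0], ![0, 0, 2], ![1, 1, 1]}) :
    ∀ (p : Fin 3 → ℤ) (c : (Fin 3 → ℤ) ⧸ L),
      c ≠ QuotientAddGroup.mk p →
      ∃ q : Fin 3 → ℤ, (QuotientAddGroup.mk q : (Fin 3 → ℤ) ⧸ L) = c ∧
        ∑ i : Fin 3, (p i - q i) ^ 2 = 1 := by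
  intro p c hc
  obtain ⟨r, rfl⟩ := QuotientAddGroup.mk_surjective c
  have hne : ¬ ((r - p) ∈ L) := by
    intro h
    exact hc (QuotientAddGroup.eq.mpr (by rwa [neg_add_eq_sub])).symm
  rw [mem_lat_iff L hL] at hne
  set a := (r - p) 1 - (r - p) 0 with ha
  set b := (r - p) 2 - (r - p) 0 with hb
  have key : ∀ q : Fin 3 → ℤ, (q - r) ∈ L → (QuotientAddGroup.mk q : (Fin 3 → ℤ) ⧸ L) = QuotientAddGroup.mk r :=
    fun q h => QuotientAddGroup.eq.mpr (by rw [neg_add_eq_sub]; simpa using neg_mem h)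
  have hab : a = r 1 - p 1 - (r 0 - p 0) ∧ b = r 2 - p 2 - (r 0 - p 0) := by
    constructor <;> simp [ha, hb, Pi.sub_apply] <;> ring
  obtain ⟨ha', hb'⟩ := hab
  rcases (show a % 3 = 0 ∨ a % 3 = 1 ∨ a % 3 = 2 by omega) with h1 | h1 | h1 <;>
    rcases (show b % 2 = 0 ∨ b % 2 = 1 by omega) with h2 | h2
  · exact absurd ⟨by omega, by omega⟩ hne
  · -- (0,1): q = p + e₃
    refine ⟨![p 0, p 1, p 2 + 1], key _ ?_, ?_⟩
    · rw [mem_lat_iff L hL]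
      constructor <;> simp [Pi.sub_apply] <;> omega
    · simp [Fin.sum_univ_three]
  · -- (1,0): q = p + e₂
    refine ⟨![p 0, p 1 + 1, p 2], key _ ?_, ?_⟩
    · rw [mem_lat_iff L hL]
      constructor <;> simp [Pi.sub_apply] <;> omega
    · simp [Fin.sum_univ_three]
  · -- (1,1): q = p - e₁
    refine ⟨![p 0 - 1, p 1, p 2], key _ ?_, ?_⟩
    · rw [mem_lat_iff L hL]
      constructor <;> simp [Pi.sub_apply] <;> omega
    · simp [Fin.sum_univ_three]
  · -- (2,0): q = p - e₂
    refine ⟨![p 0, p 1 - 1, p 2], key _ ?_, ?_⟩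
    · rw [mem_lat_iff L hL]
      constructor <;> simp [Pi.sub_apply] <;> omega
    · simp [Fin.sum_univ_three]
  · -- (2,1): q = p + e₁
    refine ⟨![p 0 + 1, p 1, p 2], key _ ?_, ?_⟩
    · rw [mem_lat_iff L hL]
      constructor <;> simp [Pi.sub_apply] <;> omega
    · simp [Fin.sum_univ_three]
end
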